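/- For B, F with finite Haar expansion there is an absolute constant C such that ‖Δ(B,F)‖_{SBMO} ≤ C ‖π_B‖ · ‖F‖_{SBMO}, using that P_I Δ(B,F) applied to e equals Δ_{B*}(P_I F_e) so that ‖P_I Δ(B,F)e‖_{L²(T,H)} ≤ ‖π_B‖ · ‖P_I F_e‖_{L²(T,H)}. -/

import Mathlib

open MeasureTheory ENNReal ContinuousLinearMap
open scoped Classical NNReal

noncomputable section

/-- A dyadic subinterval of the unit circle `[0,1)`, given by generation `n`
and position `k < 2 ^ n`; it represents `[k/2^n, (k+1)/2^n)`. -/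
structure DyadicInterval where
  n : ℕ
  k : ℕ
  hk : k < 2 ^ n

namespace DyadicInterval

/-- The underlying set of a dyadic interval. -/
def set (I : DyadicInterval) : Set ℝ :=
  Set.Ico ((I.k : ℝ) / 2 ^ I.n) (((I.k : ℝ) + 1) / 2 ^ I.n)

/-- The length `|I|` of a dyadic interval. -/
def len (I : DyadicInterval) : ℝ := ((2 : ℝ) ^ I.n)⁻¹

/-- The left half `I⁺`. -/
def left (I : DyadicInterval) : DyadicInterval :=
  ⟨I.n + 1, 2 * I.k, by have := I.hk; omega⟩

/-- The right half `I⁻`. -/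
def right (I : DyadicInterval) : DyadicInterval :=
  ⟨I.n + 1, 2 * I.k + 1, by have := I.hk; omega⟩

/-- The indicator function `χ_I`. -/
def ind (I : DyadicInterval) : ℝ → ℝ := Set.indicator I.set fun _ => (1 : ℝ)

/-- The Haar function `h_I = |I|^{-1/2} (χ_{I⁺} - χ_{I⁻})`. -/
def haar (I : DyadicInterval) : ℝ → ℝ :=
  fun t => (Real.sqrt I.len)⁻¹ * (I.left.ind t - I.right.ind t)

end DyadicInterval

/-- Normalized Lebesgue measure on the circle, realized as `[0,1) ⊆ ℝ`. -/
def circleMeasure : Measure ℝ := volume.restrict (Set.Ico (0 : ℝ) 1)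

/-- Haar coefficient `f_I = ∫ f h_I`. -/
def haarCoeff {E : Type*} [NormedAddCommGroup E] [NormedSpace ℝ E]
    (f : ℝ → E) (I : DyadicInterval) : E :=
  ∫ t, I.haar t • f t ∂circleMeasure

/-- Average `m_I f = |I|⁻¹ ∫_I f`. -/
def avg {E : Type*} [NormedAddCommGroup E] [NormedSpace ℝ E]
    (f : ℝ → E) (I : DyadicInterval) : E :=
  I.len⁻¹ • ∫ t in I.set, f t

variable {H : Type*} [NormedAddCommGroup H] [InnerProductSpace ℂ H] [CompleteSpace H]

/-- An operator-valued function with finite formal Haar expansion is recorded by its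
finitely supported family of Haar coefficients `B_I ∈ L(H)`. -/
abbrev OpCoeffs (H : Type*) [NormedAddCommGroup H] [InnerProductSpace ℂ H] :=
  DyadicInterval →₀ (H →L[ℂ] H)

/-- The function `B = ∑_I h_I B_I`. -/
def Bfun (b : OpCoeffs H) : ℝ → (H →L[ℂ] H) :=
  fun t => ∑ I ∈ b.support, I.haar t • b I

/-- The dyadic paraproduct `π_B f = ∑_I B_I (m_I f) h_I`. -/
def para (b : OpCoeffs H) (f : ℝ → H) : ℝ → H :=
  fun t => ∑ I ∈ b.support, I.haar t • (b I) (avg f I)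

/-- The operator `Δ_B f = ∑_I B_I (f_I) χ_I / |I|`. -/
def delta (b : OpCoeffs H) (f : ℝ → H) : ℝ → H :=
  fun t => ∑ I ∈ b.support, (I.len⁻¹ * I.ind t) • (b I) (haarCoeff f I)

/-- The Haar projection `P_I B = ∑_{J ⊆ I} h_J B_J` for `B` with finite Haar expansion. -/
def PIB (b : OpCoeffs H) (I : DyadicInterval) : ℝ → (H →L[ℂ] H) :=
  fun t => ∑ J ∈ b.support.filter fun J => J.set ⊆ I.set, J.haar t • b J

/-- The Haar projection `P_I G = ∑_{J ⊆ I} h_J G_J` for a general operator-valued `G`. -/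
def PIBF (G : ℝ → (H →L[ℂ] H)) (I : DyadicInterval) : ℝ → (H →L[ℂ] H) :=
  fun t => ∑' J : {J : DyadicInterval // J.set ⊆ I.set}, (J : DyadicInterval).haar t • haarCoeff G J

/-- The multiplier `Λ_B f = ∑_I (P_I B)(f_I) h_I`. -/
def Lambda (b : OpCoeffs H) (f : ℝ → H) : ℝ → H :=
  fun t => ∑' I : DyadicInterval, I.haar t • (PIB b I t) (haarCoeff f I)

/-- The multiplier `Λ_G f = ∑_I (P_I G)(f_I) h_I` for a general symbol `G`. -/
def LambdaF (G : ℝ → (H →L[ℂ] H)) (f : ℝ → H) : ℝ → H :=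
  fun t => ∑' I : DyadicInterval, I.haar t • (PIBF G I t) (haarCoeff f I)

/-- The paraproduct `π_G f = ∑_I G_I (m_I f) h_I` for a general symbol `G`. -/
def paraF (G : ℝ → (H →L[ℂ] H)) (f : ℝ → H) : ℝ → H :=
  fun t => ∑' I : DyadicInterval, I.haar t • (haarCoeff G I) (avg f I)

/-- The adjoint `π_G^* f = ∑_I G_I^* (f_I) χ_I/|I|` of the paraproduct with symbol `G`. -/
def paraStarF (G : ℝ → (H →L[ℂ] H)) (f : ℝ → H) : ℝ → H :=
  fun t => ∑' I : DyadicInterval,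
    (I.len⁻¹ * I.ind t) • (ContinuousLinearMap.adjoint (haarCoeff G I)) (haarCoeff f I)

/-- The coefficients of `B^*`, i.e. `I ↦ B_I^*`. -/
def adjC (b : OpCoeffs H) : OpCoeffs H :=
  b.mapRange (fun A => ContinuousLinearMap.adjoint A) (by simp)

/-- The sweep `S_B = ∑_I B_I^* B_I χ_I / |I|`. -/
def sweep (b : OpCoeffs H) : ℝ → (H →L[ℂ] H) :=
  fun t => ∑ I ∈ b.support,
    (I.len⁻¹ * I.ind t) • (ContinuousLinearMap.adjoint (b I) ∘L b I)

/-- The bilinear sweep `Δ(B,F) = ∑_J B_J^* F_J χ_J / |J|`. -/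
def DeltaBil (b F : OpCoeffs H) : ℝ → (H →L[ℂ] H) :=
  fun t => ∑ J ∈ b.support ∪ F.support,
    (J.len⁻¹ * J.ind t) • (ContinuousLinearMap.adjoint (b J) ∘L F J)

/-- The block diagonal operator `D_B (h_I ⊗ x) = h_I |I|⁻¹ ∑_{J ⊊ I} B_J^* B_J x`. -/
def Dop (b : OpCoeffs H) (f : ℝ → H) : ℝ → H :=
  fun t => ∑' I : DyadicInterval, I.haar t •
    (I.len⁻¹ • ∑ J ∈ b.support.filter fun J => J.set ⊂ I.set,
      (ContinuousLinearMap.adjoint (b J) ∘L b J)) (haarCoeff f I)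

/-- The block diagonal operator `D_{B,F} (h_I ⊗ x) = h_I |I|⁻¹ ∑_{J ⊊ I} B_J^* F_J x`. -/
def DopBil (b F : OpCoeffs H) (f : ℝ → H) : ℝ → H :=
  fun t => ∑' I : DyadicInterval, I.haar t •
    (I.len⁻¹ • ∑ J ∈ (b.support ∪ F.support).filter fun J => J.set ⊂ I.set,
      (ContinuousLinearMap.adjoint (b J) ∘L F J)) (haarCoeff f I)

/-- The operator norm of a map on `L²(𝕋, H)`, where `L²(𝕋,H)` is realized as the
(mean-zero) closed span of the Haar system `f = ∑_I f_I h_I`. -/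
def l2NormOp (T : (ℝ → H) → (ℝ → H)) : ℝ≥0∞ :=
  ⨆ f : {f : ℝ → H // MemLp f 2 circleMeasure ∧ (∫ t, f t ∂circleMeasure) = 0 ∧
      eLpNorm f 2 circleMeasure ≤ 1},
    eLpNorm (T f.1) 2 circleMeasure

/-- The Haar multiplier norm of a family `(Φ_I)_{I ∈ D}`, i.e. the norm of
`ℓ²(D,H) → L²(𝕋,H)`, `(f_I) ↦ ∑_I Φ_I (f_I) h_I`. -/
def multNorm (Φ : DyadicInterval → ℝ → (H →L[ℂ] H)) : ℝ≥0∞ :=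
  ⨆ c : {c : DyadicInterval →₀ H // ∑ I ∈ c.support, ‖c I‖ ^ 2 ≤ 1},
    eLpNorm (fun t => ∑ I ∈ (c : DyadicInterval →₀ H).support,
      I.haar t • (Φ I t) ((c : DyadicInterval →₀ H) I)) 2 circleMeasure

/-- The dyadic BMO norm of a vector-valued function. -/
def bmoNorm {E : Type*} [NormedAddCommGroup E] [NormedSpace ℝ E] (f : ℝ → E) : ℝ≥0∞ :=
  ⨆ I : DyadicInterval,
    ENNReal.ofReal (I.len⁻¹ * ∫ t in I.set, ‖f t - avg f I‖ ^ 2) ^ (1/2 : ℝ)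

/-- The strong BMO norm `‖B‖_{SBMO} = sup_{‖e‖=1} ‖B e‖_{BMO(H)}`. -/
def sbmoNorm (B : ℝ → (H →L[ℂ] H)) : ℝ≥0∞ :=
  ⨆ e : {e : H // ‖e‖ = 1}, bmoNorm fun t => B t e.1

/-- The `BMO_so` norm `‖B‖ = ‖B‖_{SBMO} + ‖B^*‖_{SBMO}`. -/
def bmosoNorm (B : ℝ → (H →L[ℂ] H)) : ℝ≥0∞ :=
  sbmoNorm B + sbmoNorm fun t => ContinuousLinearMap.adjoint (B t)

/-- A family of independent fair random signs `(σ_I)_{I ∈ D}`, modelling the product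
probability space `Σ = {-1,1}^D`. -/
structure SignSpace {Ω : Type*} [MeasurableSpace Ω] (ℙ : Measure Ω)
    (σ : DyadicInterval → Ω → ℝ) : Prop where
  prob : IsProbabilityMeasure ℙ
  meas : ∀ I, Measurable (σ I)
  values : ∀ I, ∀ ω, σ I ω = 1 ∨ σ I ω = -1
  indep : ProbabilityTheory.iIndepFun σ ℙ
  fair : ∀ I, ℙ {ω | σ I ω = 1} = 1/2

end

/-!
For finitely supported `B` and `F` every function in sight is a finite sum. The Haar coefficients
of `χ_K/|K|` live on the strict ancestors of `K`, and `∑ h_J ⟨h_J, χ_K/|K|⟩` over the ancestors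
`J ⊆ I` telescopes to `χ_K/|K| - χ_I/|I|`. Hence
`v := P_I Δ(B,F) e = ∑_{K ⊆ I} (χ_K/|K| - χ_I/|I|) B_K^* F_K e` is supported on `I` and has
mean zero, and pairing `v` with itself gives
`‖v‖² = ∑_{K ⊆ I} ⟨F_K e, B_K m_K v⟩ = ⟨P_I F_e, π_B v⟩ ≤ ‖P_I F_e‖ ‖π_B‖ ‖v‖`.
On `I`, both `Δ(B,F) e - m_I (Δ(B,F) e)` and `F_e - m_I F_e` coincide with their projections
`P_I`, so their mean oscillations over `I` are `|I|^{-1/2}` times these `L²` norms, and the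
`SBMO` bound holds with `C = 1`.
-/

noncomputable section

open Finset DyadicInterval

instance : IsFiniteMeasure circleMeasure := by
  unfold circleMeasure; infer_instance

lemma integrable_mul_of_memLp_top {α : Type*} [MeasurableSpace α] {μ : Measure α}
    [IsFiniteMeasure μ] {f g : α → ℝ} (hf : MemLp f ⊤ μ) (hg : MemLp g ⊤ μ) :
    Integrable (fun t => f t * g t) μ :=
  (hf.integrable le_top).mul_of_top_left hg

namespace DyadicInterval

lemma ext {I J : DyadicInterval} (hn : I.n = J.n) (hk : I.k = J.k) : I = J := by
  cases I; cases J; simp_all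

lemma len_pos (I : DyadicInterval) : 0 < I.len := by
  unfold len; positivity

lemma left_endpoint_lt (I : DyadicInterval) :
    (I.k : ℝ) / 2 ^ I.n < ((I.k : ℝ) + 1) / 2 ^ I.n := by
  gcongr; linarith

lemma set_subset_Ico (I : DyadicInterval) : I.set ⊆ Set.Ico 0 1 := by
  have hk : (I.k : ℝ) + 1 ≤ 2 ^ I.n := by exact_mod_cast I.hk
  refine Set.Ico_subset_Ico (by positivity) ?_
  rwa [div_le_one (by positivity)]

lemma n_le_of_set_subset {J K : DyadicInterval} (h : J.set ⊆ K.set) : K.n ≤ J.n := by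
  obtain ⟨h1, h2⟩ := (Set.Ico_subset_Ico_iff J.left_endpoint_lt).mp h
  by_contra! hlt
  have h3 : (2 : ℝ) ^ J.n < 2 ^ K.n := pow_lt_pow_right₀ (by norm_num) hlt
  rw [div_le_div_iff₀ (by positivity) (by positivity)] at h1 h2
  nlinarith

lemma div_two_pow_eq_mul_div_two_pow {m n : ℕ} (h : m ≤ n) (a : ℝ) :
    a / 2 ^ m = a * 2 ^ (n - m) / 2 ^ n := by
  rw [← pow_sub_mul_pow 2 h]
  field_simp

lemma set_subset_iff {J K : DyadicInterval} :
    J.set ⊆ K.set ↔ K.n ≤ J.n ∧ K.k * 2 ^ (J.n - K.n) ≤ J.k ∧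
      J.k + 1 ≤ (K.k + 1) * 2 ^ (J.n - K.n) := by
  by_cases hn : K.n ≤ J.n
  · rw [set, set, Set.Ico_subset_Ico_iff J.left_endpoint_lt,
      div_two_pow_eq_mul_div_two_pow hn (K.k : ℝ),
      div_two_pow_eq_mul_div_two_pow hn ((K.k : ℝ) + 1),
      div_le_div_iff_of_pos_right (by positivity), div_le_div_iff_of_pos_right (by positivity)]
    simp only [hn, true_and]
    norm_cast
  · exact iff_of_false (fun h => hn (n_le_of_set_subset h)) fun h => hn h.1

lemma set_subset_of_le_of_mem {J K : DyadicInterval} (hn : K.n ≤ J.n) {x : ℝ}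
    (hxJ : x ∈ J.set) (hxK : x ∈ K.set) : J.set ⊆ K.set := by
  have h1 := hxK.1.trans_lt hxJ.2
  have h2 := hxJ.1.trans_lt hxK.2
  rw [div_two_pow_eq_mul_div_two_pow hn, div_lt_div_iff_of_pos_right (by positivity)] at h1 h2
  norm_cast at h1 h2
  exact set_subset_iff.mpr ⟨hn, by omega, by omega⟩

lemma set_subset_or_subset_or_disjoint (J K : DyadicInterval) :
    J.set ⊆ K.set ∨ K.set ⊆ J.set ∨ Disjoint J.set K.set := by
  by_cases hd : Disjoint J.set K.set
  · exact Or.inr (Or.inr hd)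
  obtain ⟨x, hxJ, hxK⟩ := Set.not_disjoint_iff.mp hd
  rcases le_total K.n J.n with h | h
  · exact Or.inl (set_subset_of_le_of_mem h hxJ hxK)
  · exact Or.inr (Or.inl (set_subset_of_le_of_mem h hxK hxJ))

/-- The dyadic interval of generation `m` containing `K` (meaningful for `m ≤ K.n`). -/
def ancestor (K : DyadicInterval) (m : ℕ) : DyadicInterval :=
  ⟨m, K.k / 2 ^ (K.n - m), by
    rw [Nat.div_lt_iff_lt_mul (by positivity), ← pow_add]
    exact K.hk.trans_le (Nat.pow_le_pow_right two_pos (by omega))⟩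

@[simp] lemma ancestor_n (K : DyadicInterval) (m : ℕ) : (K.ancestor m).n = m := rfl

@[simp] lemma ancestor_k (K : DyadicInterval) (m : ℕ) :
    (K.ancestor m).k = K.k / 2 ^ (K.n - m) := rfl

@[simp] lemma ancestor_self (K : DyadicInterval) : K.ancestor K.n = K :=
  ext rfl (by simp)

lemma set_subset_ancestor {K : DyadicInterval} {m : ℕ} (h : m ≤ K.n) :
    K.set ⊆ (K.ancestor m).set := by
  have hdiv := Nat.div_add_mod K.k (2 ^ (K.n - m))
  have hmod := Nat.mod_lt K.k (show 0 < 2 ^ (K.n - m) by positivity)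
  refine set_subset_iff.mpr ⟨by simpa using h, ?_, ?_⟩ <;> simp only [ancestor_k, ancestor_n]
  · exact Nat.div_mul_le_self _ _
  · nlinarith

lemma eq_ancestor_of_set_subset {J K : DyadicInterval} (h : K.set ⊆ J.set) :
    J = K.ancestor J.n := by
  obtain ⟨_, h1, h2⟩ := set_subset_iff.mp h
  exact ext rfl (Nat.div_eq_of_lt_le h1 (by linarith)).symm

lemma ancestor_ancestor {K : DyadicInterval} {m m' : ℕ} (h1 : m' ≤ m) (h2 : m ≤ K.n) :
    (K.ancestor m).ancestor m' = K.ancestor m' := by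
  refine ext rfl ?_
  simp only [ancestor_k, ancestor_n]
  rw [Nat.div_div_eq_div_mul, ← pow_add]
  congr 2
  omega

lemma ancestor_set_subset_ancestor {K : DyadicInterval} {m m' : ℕ} (h1 : m' ≤ m)
    (h2 : m ≤ K.n) : (K.ancestor m).set ⊆ (K.ancestor m').set := by
  rw [← ancestor_ancestor h1 h2]
  exact set_subset_ancestor (by simpa using h1)

@[simp] lemma left_n (I : DyadicInterval) : I.left.n = I.n + 1 := rfl
@[simp] lemma left_k (I : DyadicInterval) : I.left.k = 2 * I.k := rfl
@[simp] lemma right_n (I : DyadicInterval) : I.right.n = I.n + 1 := rfl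
@[simp] lemma right_k (I : DyadicInterval) : I.right.k = 2 * I.k + 1 := rfl

lemma ancestor_succ_eq_left_or_right {K : DyadicInterval} {m : ℕ} (h : m < K.n) :
    K.ancestor (m + 1) = (K.ancestor m).left ∨ K.ancestor (m + 1) = (K.ancestor m).right := by
  have hk : (K.ancestor (m + 1)).k / 2 = (K.ancestor m).k := by
    simp only [ancestor_k, Nat.div_div_eq_div_mul, ← pow_succ]
    congr 3
    omega
  rcases Nat.even_or_odd' (K.ancestor (m + 1)).k with ⟨j, hj | hj⟩
  · exact Or.inl (ext rfl (by simp only [left_k]; omega))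
  · exact Or.inr (ext rfl (by simp only [right_k]; omega))

lemma left_set (I : DyadicInterval) :
    I.left.set = Set.Ico ((I.k : ℝ) / 2 ^ I.n) ((2 * (I.k : ℝ) + 1) / 2 ^ (I.n + 1)) := by
  simp only [set, left_n, left_k, pow_succ]
  push_cast
  congr 1
  field_simp

lemma right_set (I : DyadicInterval) :
    I.right.set = Set.Ico ((2 * (I.k : ℝ) + 1) / 2 ^ (I.n + 1)) (((I.k : ℝ) + 1) / 2 ^ I.n) := by
  simp only [set, right_n, right_k, pow_succ]
  push_cast
  congr 1
  field_simp
  ring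

lemma left_set_union_right_set (I : DyadicInterval) : I.left.set ∪ I.right.set = I.set := by
  rw [left_set, right_set]
  have h2n := pow_pos (two_pos : (0 : ℝ) < 2) I.n
  refine Set.Ico_union_Ico_eq_Ico ?_ ?_ <;>
    rw [div_le_div_iff₀ (by positivity) (by positivity), pow_succ] <;> nlinarith

lemma disjoint_left_right (I : DyadicInterval) : Disjoint I.left.set I.right.set := by
  rw [left_set, right_set]
  exact Set.Ico_disjoint_Ico_same

lemma left_set_subset (I : DyadicInterval) : I.left.set ⊆ I.set :=
  I.left_set_union_right_set ▸ Set.subset_union_left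

lemma right_set_subset (I : DyadicInterval) : I.right.set ⊆ I.set :=
  I.left_set_union_right_set ▸ Set.subset_union_right

lemma len_left (I : DyadicInterval) : I.left.len = I.len / 2 := by
  simp only [len, left_n, pow_succ]
  field_simp

lemma len_right (I : DyadicInterval) : I.right.len = I.len / 2 := by
  simp only [len, right_n, pow_succ]
  field_simp

lemma set_subset_left_or_right {J K : DyadicInterval} (h : K.set ⊆ J.set) (hne : K ≠ J) :
    K.set ⊆ J.left.set ∨ K.set ⊆ J.right.set := by
  have hJ := eq_ancestor_of_set_subset h
  have hlt : J.n < K.n :=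
    (n_le_of_set_subset h).lt_of_ne fun heq => hne (by rw [hJ, heq, ancestor_self])
  have hsub := set_subset_ancestor (K := K) hlt
  rcases ancestor_succ_eq_left_or_right hlt with h' | h' <;> rw [← hJ] at h'
  · exact Or.inl (h' ▸ hsub)
  · exact Or.inr (h' ▸ hsub)

lemma measurableSet_set (I : DyadicInterval) : MeasurableSet I.set := measurableSet_Ico

lemma ind_of_mem {I : DyadicInterval} {t : ℝ} (h : t ∈ I.set) : I.ind t = 1 :=
  Set.indicator_of_mem h _

lemma ind_of_notMem {I : DyadicInterval} {t : ℝ} (h : t ∉ I.set) : I.ind t = 0 :=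
  Set.indicator_of_notMem h _

lemma ind_eq_left_add_right (I : DyadicInterval) (t : ℝ) :
    I.ind t = I.left.ind t + I.right.ind t := by
  simp only [ind, ← I.left_set_union_right_set]
  exact congrFun (Set.indicator_union_of_disjoint I.disjoint_left_right _) t

lemma memLp_top_ind (I : DyadicInterval) : MemLp I.ind ⊤ circleMeasure :=
  memLp_top_of_bound (measurable_const.indicator I.measurableSet_set).aestronglyMeasurable 1
    (ae_of_all _ fun t => by
      by_cases h : t ∈ I.set <;> simp [ind_of_mem, ind_of_notMem, h])

lemma haar_of_mem_left {I : DyadicInterval} {t : ℝ} (h : t ∈ I.left.set) :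
    I.haar t = (Real.sqrt I.len)⁻¹ := by
  rw [haar, ind_of_mem h,
    ind_of_notMem (Set.disjoint_left.mp I.disjoint_left_right h), sub_zero, mul_one]

lemma haar_of_mem_right {I : DyadicInterval} {t : ℝ} (h : t ∈ I.right.set) :
    I.haar t = -(Real.sqrt I.len)⁻¹ := by
  rw [haar, ind_of_mem h,
    ind_of_notMem (Set.disjoint_right.mp I.disjoint_left_right h), zero_sub, mul_neg_one]

lemma haar_of_notMem {I : DyadicInterval} {t : ℝ} (h : t ∉ I.set) : I.haar t = 0 := by
  rw [haar, ind_of_notMem (fun ht => h (I.left_set_subset ht)),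
    ind_of_notMem (fun ht => h (I.right_set_subset ht)), sub_zero, mul_zero]

lemma memLp_top_haar (I : DyadicInterval) : MemLp I.haar ⊤ circleMeasure :=
  ((I.left.memLp_top_ind.sub I.right.memLp_top_ind).const_mul _ :)

def avgKernel (I : DyadicInterval) (t : ℝ) : ℝ := I.len⁻¹ * I.ind t

lemma memLp_top_avgKernel (I : DyadicInterval) : MemLp I.avgKernel ⊤ circleMeasure :=
  (I.memLp_top_ind.const_mul _ :)

lemma inv_sqrt_len_mul_self (I : DyadicInterval) :
    (Real.sqrt I.len)⁻¹ * (Real.sqrt I.len)⁻¹ = I.len⁻¹ := by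
  rw [← mul_inv, Real.mul_self_sqrt I.len_pos.le]

lemma haar_mul_haar_self (I : DyadicInterval) (t : ℝ) : I.haar t * I.haar t = I.avgKernel t := by
  rw [avgKernel]
  by_cases hL : t ∈ I.left.set
  · rw [haar_of_mem_left hL, ind_of_mem (I.left_set_subset hL), inv_sqrt_len_mul_self, mul_one]
  by_cases hR : t ∈ I.right.set
  · rw [haar_of_mem_right hR, ind_of_mem (I.right_set_subset hR), neg_mul_neg,
      inv_sqrt_len_mul_self, mul_one]
  have ht : t ∉ I.set := by
    rw [← I.left_set_union_right_set]; exact fun h => h.elim hL hR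
  rw [haar_of_notMem ht, ind_of_notMem ht, mul_zero, mul_zero]

lemma integral_ind (I : DyadicInterval) : ∫ t, I.ind t ∂circleMeasure = I.len := by
  rw [ind, integral_indicator_const _ I.measurableSet_set, smul_eq_mul, mul_one, measureReal_def,
    circleMeasure, Measure.restrict_apply I.measurableSet_set,
    Set.inter_eq_left.mpr I.set_subset_Ico, set, Real.volume_Ico,
    ENNReal.toReal_ofReal (by linarith [I.left_endpoint_lt]), len]
  ring

lemma integral_avgKernel (I : DyadicInterval) : ∫ t, I.avgKernel t ∂circleMeasure = 1 := by
  simp only [avgKernel]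
  rw [integral_const_mul, integral_ind, inv_mul_cancel₀ I.len_pos.ne']

lemma integral_ind_mul_ind_of_subset {J K : DyadicInterval} (h : J.set ⊆ K.set) :
    ∫ t, J.ind t * K.ind t ∂circleMeasure = J.len := by
  have (t : ℝ) : J.ind t * K.ind t = J.ind t := by
    by_cases ht : t ∈ J.set
    · rw [ind_of_mem ht, ind_of_mem (h ht), mul_one]
    · rw [ind_of_notMem ht, zero_mul]
  simp_rw [this, integral_ind]

lemma integral_ind_mul_ind_of_superset {J K : DyadicInterval} (h : K.set ⊆ J.set) :
    ∫ t, J.ind t * K.ind t ∂circleMeasure = K.len := by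
  simp_rw [mul_comm (J.ind _)]
  exact integral_ind_mul_ind_of_subset h

lemma integral_ind_mul_ind_of_disjoint {J K : DyadicInterval} (h : Disjoint J.set K.set) :
    ∫ t, J.ind t * K.ind t ∂circleMeasure = 0 := by
  have (t : ℝ) : J.ind t * K.ind t = 0 := by
    by_cases ht : t ∈ J.set
    · rw [ind_of_notMem (Set.disjoint_left.mp h ht), mul_zero]
    · rw [ind_of_notMem ht, zero_mul]
  simp_rw [this, integral_zero]

lemma integral_haar_mul_ind (J K : DyadicInterval) :
    ∫ t, J.haar t * K.ind t ∂circleMeasure = (Real.sqrt J.len)⁻¹ *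
      ((∫ t, J.left.ind t * K.ind t ∂circleMeasure) -
        ∫ t, J.right.ind t * K.ind t ∂circleMeasure) := by
  simp_rw [haar, mul_assoc, sub_mul]
  rw [integral_const_mul, integral_sub
    (integrable_mul_of_memLp_top J.left.memLp_top_ind K.memLp_top_ind)
    (integrable_mul_of_memLp_top J.right.memLp_top_ind K.memLp_top_ind)]

lemma integral_haar_mul_ind_of_subset_left {J K : DyadicInterval} (h : K.set ⊆ J.left.set) :
    ∫ t, J.haar t * K.ind t ∂circleMeasure = K.len * (Real.sqrt J.len)⁻¹ := by
  rw [integral_haar_mul_ind, integral_ind_mul_ind_of_superset h,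
    integral_ind_mul_ind_of_disjoint (J.disjoint_left_right.mono_left h).symm, sub_zero, mul_comm]

lemma integral_haar_mul_ind_of_subset_right {J K : DyadicInterval} (h : K.set ⊆ J.right.set) :
    ∫ t, J.haar t * K.ind t ∂circleMeasure = -(K.len * (Real.sqrt J.len)⁻¹) := by
  rw [integral_haar_mul_ind, integral_ind_mul_ind_of_disjoint (J.disjoint_left_right.mono_right h),
    integral_ind_mul_ind_of_superset h, zero_sub, mul_neg, mul_comm]

lemma integral_haar_mul_ind_of_subset {J K : DyadicInterval} (h : J.set ⊆ K.set) :
    ∫ t, J.haar t * K.ind t ∂circleMeasure = 0 := by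
  rw [integral_haar_mul_ind, integral_ind_mul_ind_of_subset (J.left_set_subset.trans h),
    integral_ind_mul_ind_of_subset (J.right_set_subset.trans h), len_left, len_right, sub_self,
    mul_zero]

lemma integral_haar_mul_ind_of_disjoint {J K : DyadicInterval} (h : Disjoint J.set K.set) :
    ∫ t, J.haar t * K.ind t ∂circleMeasure = 0 := by
  rw [integral_haar_mul_ind, integral_ind_mul_ind_of_disjoint (h.mono_left J.left_set_subset),
    integral_ind_mul_ind_of_disjoint (h.mono_left J.right_set_subset), sub_self, mul_zero]

lemma integral_haar_mul_haar_of_ne_of_subset {J K : DyadicInterval} (h : J.set ⊆ K.set)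
    (hne : J ≠ K) : ∫ t, J.haar t * K.haar t ∂circleMeasure = 0 := by
  have hchild (C : DyadicInterval) (hC : J.set ⊆ C.set ∨ Disjoint J.set C.set) :
      ∫ t, J.haar t * C.ind t ∂circleMeasure = 0 :=
    hC.elim integral_haar_mul_ind_of_subset integral_haar_mul_ind_of_disjoint
  have (t : ℝ) : J.haar t * K.haar t =
      (Real.sqrt K.len)⁻¹ * (J.haar t * K.left.ind t - J.haar t * K.right.ind t) := by
    simp only [haar]; ring
  simp_rw [this]
  rw [integral_const_mul, integral_sub
    (integrable_mul_of_memLp_top J.memLp_top_haar K.left.memLp_top_ind)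
    (integrable_mul_of_memLp_top J.memLp_top_haar K.right.memLp_top_ind)]
  rcases set_subset_left_or_right h hne with hL | hR
  · rw [hchild _ (Or.inl hL), hchild _ (Or.inr (K.disjoint_left_right.mono_left hL)),
      sub_self, mul_zero]
  · rw [hchild _ (Or.inl hR), hchild _ (Or.inr (K.disjoint_left_right.symm.mono_left hR)),
      sub_self, mul_zero]

lemma integral_haar_mul_haar (J K : DyadicInterval) :
    ∫ t, J.haar t * K.haar t ∂circleMeasure = if J = K then 1 else 0 := by
  split_ifs with hJK
  · subst hJK
    simp_rw [haar_mul_haar_self, integral_avgKernel]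
  rcases set_subset_or_subset_or_disjoint J K with h | h | h
  · exact integral_haar_mul_haar_of_ne_of_subset h hJK
  · simp_rw [mul_comm (J.haar _)]
    exact integral_haar_mul_haar_of_ne_of_subset h (Ne.symm hJK)
  · have (t : ℝ) : J.haar t * K.haar t = 0 := by
      by_cases ht : t ∈ J.set
      · rw [haar_of_notMem (Set.disjoint_left.mp h ht), mul_zero]
      · rw [haar_of_notMem ht, zero_mul]
    simp_rw [this, integral_zero]

def strictAncestors (K : DyadicInterval) : Finset DyadicInterval :=
  (range K.n).image K.ancestor

lemma integral_haar_mul_avgKernel (J K : DyadicInterval) :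
    ∫ t, J.haar t * K.avgKernel t ∂circleMeasure =
      K.len⁻¹ * ∫ t, J.haar t * K.ind t ∂circleMeasure := by
  simp_rw [avgKernel, mul_left_comm (J.haar _)]
  exact integral_const_mul _ _

lemma integral_haar_mul_avgKernel_of_notMem {J K : DyadicInterval} (h : J ∉ K.strictAncestors) :
    ∫ t, J.haar t * K.avgKernel t ∂circleMeasure = 0 := by
  rw [integral_haar_mul_avgKernel, mul_eq_zero_iff_left (inv_ne_zero K.len_pos.ne')]
  rcases set_subset_or_subset_or_disjoint J K with hJK | hKJ | hJK
  · exact integral_haar_mul_ind_of_subset hJK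
  · have hJ := eq_ancestor_of_set_subset hKJ
    rcases (n_le_of_set_subset hKJ).lt_or_eq with hlt | heq
    · exact absurd (mem_image.mpr ⟨J.n, mem_range.mpr hlt, hJ.symm⟩) h
    · rw [hJ, heq, ancestor_self]
      exact integral_haar_mul_ind_of_subset subset_rfl
  · exact integral_haar_mul_ind_of_disjoint hJK

lemma haar_mul_integral_haar_mul_avgKernel_of_subset_left {P K : DyadicInterval}
    (h : K.set ⊆ P.left.set) (t : ℝ) :
    P.haar t * ∫ s, P.haar s * K.avgKernel s ∂circleMeasure =
      P.left.avgKernel t - P.avgKernel t := by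
  rw [integral_haar_mul_avgKernel, integral_haar_mul_ind_of_subset_left h,
    inv_mul_cancel_left₀ K.len_pos.ne', haar, avgKernel, avgKernel, len_left,
    P.ind_eq_left_add_right t]
  linear_combination (P.left.ind t - P.right.ind t) * P.inv_sqrt_len_mul_self

lemma haar_mul_integral_haar_mul_avgKernel_of_subset_right {P K : DyadicInterval}
    (h : K.set ⊆ P.right.set) (t : ℝ) :
    P.haar t * ∫ s, P.haar s * K.avgKernel s ∂circleMeasure =
      P.right.avgKernel t - P.avgKernel t := by
  rw [integral_haar_mul_avgKernel, integral_haar_mul_ind_of_subset_right h, mul_neg,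
    inv_mul_cancel_left₀ K.len_pos.ne', haar, avgKernel, avgKernel, len_right,
    P.ind_eq_left_add_right t]
  linear_combination (P.right.ind t - P.left.ind t) * P.inv_sqrt_len_mul_self

lemma haar_ancestor_mul_integral {K : DyadicInterval} {m : ℕ} (hm : m < K.n) (t : ℝ) :
    (K.ancestor m).haar t * ∫ s, (K.ancestor m).haar s * K.avgKernel s ∂circleMeasure =
      (K.ancestor (m + 1)).avgKernel t - (K.ancestor m).avgKernel t := by
  have hK := set_subset_ancestor (K := K) hm
  rcases ancestor_succ_eq_left_or_right hm with h | h <;> rw [h] at hK ⊢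
  · exact haar_mul_integral_haar_mul_avgKernel_of_subset_left hK t
  · exact haar_mul_integral_haar_mul_avgKernel_of_subset_right hK t

lemma filter_strictAncestors_of_subset {I K : DyadicInterval} (h : K.set ⊆ I.set) :
    K.strictAncestors.filter (fun J => J.set ⊆ I.set) = (Ico I.n K.n).image K.ancestor := by
  have hI := eq_ancestor_of_set_subset h
  ext J
  simp only [strictAncestors, mem_filter, mem_image, mem_range, mem_Ico]
  constructor
  · rintro ⟨⟨m, hm, rfl⟩, hJI⟩
    exact ⟨m, ⟨by simpa using n_le_of_set_subset hJI, hm⟩, rfl⟩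
  · rintro ⟨m, ⟨hIm, hm⟩, rfl⟩
    exact ⟨⟨m, hm, rfl⟩, hI ▸ ancestor_set_subset_ancestor hIm hm.le⟩

lemma filter_strictAncestors_of_not_subset {I K : DyadicInterval} (h : ¬K.set ⊆ I.set) :
    K.strictAncestors.filter (fun J => J.set ⊆ I.set) = ∅ := by
  refine filter_false_of_mem fun J hJ hJI => h ?_
  obtain ⟨m, hm, rfl⟩ := mem_image.mp hJ
  exact (set_subset_ancestor (mem_range.mp hm).le).trans hJI

/-- Only the strict ancestors of `K` contribute, and their terms telescope. -/
lemma tsum_haar_mul_integral_haar_mul_avgKernel (I K : DyadicInterval) (t : ℝ) :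
    ∑' J : {J : DyadicInterval // J.set ⊆ I.set}, (J : DyadicInterval).haar t *
        ∫ s, (J : DyadicInterval).haar s * K.avgKernel s ∂circleMeasure =
      if K.set ⊆ I.set then K.avgKernel t - I.avgKernel t else 0 := by
  refine (tsum_subtype {J : DyadicInterval | J.set ⊆ I.set}
    (fun J => J.haar t * ∫ s, J.haar s * K.avgKernel s ∂circleMeasure)).trans ?_
  rw [tsum_eq_sum (s := K.strictAncestors) fun J hJ => by
      simp [integral_haar_mul_avgKernel_of_notMem hJ]]
  simp_rw [Set.indicator_apply, Set.mem_ofPred_eq, ← sum_filter]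
  split_ifs with h
  · have hI := eq_ancestor_of_set_subset h
    rw [filter_strictAncestors_of_subset h,
      sum_image fun m _ m' _ hm => by simpa using congrArg n hm,
      sum_congr rfl fun m hm => haar_ancestor_mul_integral (mem_Ico.mp hm).2 t,
      sum_Ico_sub (fun m => (K.ancestor m).avgKernel t) (n_le_of_set_subset h), ancestor_self, ← hI]
  · rw [filter_strictAncestors_of_not_subset h, sum_empty]

end DyadicInterval

section Averages

variable {E : Type*} [NormedAddCommGroup E] [NormedSpace ℝ E]

lemma memLp_top_sum_smul_const {α ι : Type*} [MeasurableSpace α] {μ : Measure α} (s : Finset ι)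
    {φ : ι → α → ℝ} (hφ : ∀ i ∈ s, MemLp (φ i) ⊤ μ) (x : ι → E) :
    MemLp (fun t => ∑ i ∈ s, φ i t • x i) ⊤ μ :=
  memLp_finsetSum s fun i hi => (memLp_top_const (x i)).smul (hφ i hi)

lemma setIntegral_eq_integral_circleMeasure {I : DyadicInterval} {f : ℝ → E}
    (hf : ∀ t ∉ I.set, f t = 0) : ∫ t in I.set, f t = ∫ t, f t ∂circleMeasure := by
  rw [setIntegral_eq_integral_of_forall_compl_eq_zero hf, circleMeasure,
    setIntegral_eq_integral_of_forall_compl_eq_zero fun t ht =>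
      hf t fun h => ht (I.set_subset_Ico h)]

lemma avg_eq_integral_avgKernel_smul (f : ℝ → E) (I : DyadicInterval) :
    avg f I = ∫ t, I.avgKernel t • f t ∂circleMeasure := by
  have hind : ∫ t in I.set, f t = ∫ t in I.set, I.set.indicator f t :=
    setIntegral_congr_fun I.measurableSet_set fun t ht => (Set.indicator_of_mem ht f).symm
  rw [avg, hind, setIntegral_eq_integral_circleMeasure fun t ht => Set.indicator_of_notMem ht f,
    ← integral_smul]
  congr with t
  by_cases ht : t ∈ I.set <;> simp [avgKernel, ind, ht]

variable [CompleteSpace E]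

lemma integral_sum_smul_const {α ι : Type*} [MeasurableSpace α] {μ : Measure α} (s : Finset ι)
    {φ : ι → α → ℝ} (hφ : ∀ i ∈ s, Integrable (φ i) μ) (x : ι → E) :
    ∫ t, ∑ i ∈ s, φ i t • x i ∂μ = ∑ i ∈ s, (∫ t, φ i t ∂μ) • x i := by
  rw [integral_finsetSum s fun i hi => (hφ i hi).smul_const _]
  simp_rw [integral_smul_const]

lemma avg_eq_inv_len_mul_integral_mul_ind (φ : ℝ → ℝ) (I : DyadicInterval) :
    avg φ I = I.len⁻¹ * ∫ t, φ t * I.ind t ∂circleMeasure := by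
  rw [avg_eq_integral_avgKernel_smul, ← integral_const_mul]
  congr with t
  rw [avgKernel, smul_eq_mul]
  ring

lemma avg_sum_smul_const (I : DyadicInterval) {ι : Type*} (s : Finset ι) {φ : ι → ℝ → ℝ}
    (hφ : ∀ i ∈ s, MemLp (φ i) ⊤ circleMeasure) (x : ι → E) :
    avg (fun t => ∑ i ∈ s, φ i t • x i) I = ∑ i ∈ s, avg (φ i) I • x i := by
  simp_rw [avg_eq_integral_avgKernel_smul, smul_sum, smul_smul, smul_eq_mul]
  exact integral_sum_smul_const s
    (fun i hi => integrable_mul_of_memLp_top I.memLp_top_avgKernel (hφ i hi)) x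

lemma haarCoeff_sum_smul_const (J : DyadicInterval) {ι : Type*} (s : Finset ι)
    {φ : ι → ℝ → ℝ} (hφ : ∀ i ∈ s, MemLp (φ i) ⊤ circleMeasure) (x : ι → E) :
    haarCoeff (fun t => ∑ i ∈ s, φ i t • x i) J =
      ∑ i ∈ s, (∫ t, J.haar t * φ i t ∂circleMeasure) • x i := by
  simp_rw [haarCoeff, smul_sum, smul_smul]
  exact integral_sum_smul_const s
    (fun i hi => integrable_mul_of_memLp_top J.memLp_top_haar (hφ i hi)) x

lemma sum_smul_const_sub_avg (I : DyadicInterval) {ι : Type*} (s : Finset ι)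
    {φ : ι → ℝ → ℝ} (hφ : ∀ i ∈ s, MemLp (φ i) ⊤ circleMeasure) (x : ι → E) (t : ℝ) :
    ∑ i ∈ s, φ i t • x i - avg (fun t => ∑ i ∈ s, φ i t • x i) I =
      ∑ i ∈ s, (φ i t - avg (φ i) I) • x i := by
  simp_rw [avg_sum_smul_const I s hφ x, ← sum_sub_distrib, sub_smul]

end Averages

namespace DyadicInterval

lemma avgKernel_sub_avg_of_mem {I K : DyadicInterval} {t : ℝ} (ht : t ∈ I.set) :
    K.avgKernel t - avg K.avgKernel I =
      if K.set ⊆ I.set then K.avgKernel t - I.avgKernel t else 0 := by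
  have hK := K.len_pos.ne'
  have hI := I.len_pos.ne'
  have havg : avg K.avgKernel I = I.len⁻¹ * (K.len⁻¹ * ∫ s, K.ind s * I.ind s ∂circleMeasure) := by
    simp_rw [avg_eq_inv_len_mul_integral_mul_ind, avgKernel, mul_assoc, integral_const_mul]
  rw [havg]
  split_ifs with hKI
  · simp only [integral_ind_mul_ind_of_subset hKI, avgKernel, ind_of_mem ht]
    field_simp
  rcases set_subset_or_subset_or_disjoint I K with hIK | hKI' | hdisj
  · simp only [integral_ind_mul_ind_of_superset hIK, avgKernel, ind_of_mem (hIK ht)]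
    field_simp
    ring
  · exact absurd hKI' hKI
  · simp only [integral_ind_mul_ind_of_disjoint hdisj.symm, avgKernel,
      ind_of_notMem (Set.disjoint_left.mp hdisj ht)]
    ring

lemma haar_sub_avg_of_mem {I J : DyadicInterval} {t : ℝ} (ht : t ∈ I.set) :
    J.haar t - avg J.haar I = if J.set ⊆ I.set then J.haar t else 0 := by
  have hI := I.len_pos.ne'
  rw [avg_eq_inv_len_mul_integral_mul_ind]
  split_ifs with hJI
  · rw [integral_haar_mul_ind_of_subset hJI, mul_zero, sub_zero]
  rcases set_subset_or_subset_or_disjoint I J with hIJ | hJI' | hdisj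
  · rcases set_subset_left_or_right hIJ fun h => hJI (h ▸ subset_rfl) with hL | hR
    · rw [integral_haar_mul_ind_of_subset_left hL, haar_of_mem_left (hL ht)]
      field_simp
      ring
    · rw [integral_haar_mul_ind_of_subset_right hR, haar_of_mem_right (hR ht)]
      field_simp
      ring
  · exact absurd hJI' hJI
  · rw [integral_haar_mul_ind_of_disjoint hdisj.symm,
      haar_of_notMem (Set.disjoint_left.mp hdisj ht)]
    ring

end DyadicInterval

section FiniteSums

variable {E : Type*} [NormedAddCommGroup E] [NormedSpace ℝ E]

def haarSum (s : Finset DyadicInterval) (c : DyadicInterval → E) (t : ℝ) : E :=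
  ∑ J ∈ s, J.haar t • c J

def localSweep (I : DyadicInterval) (s : Finset DyadicInterval) (x : DyadicInterval → E)
    (t : ℝ) : E :=
  ∑ K ∈ s, (K.avgKernel t - I.avgKernel t) • x K

lemma memLp_top_haarSum (s : Finset DyadicInterval) (c : DyadicInterval → E) :
    MemLp (haarSum s c) ⊤ circleMeasure :=
  memLp_top_sum_smul_const s (fun J _ => J.memLp_top_haar) c

lemma memLp_top_localSweep (I : DyadicInterval) (s : Finset DyadicInterval)
    (x : DyadicInterval → E) : MemLp (localSweep I s x) ⊤ circleMeasure :=
  memLp_top_sum_smul_const s (fun K _ => K.memLp_top_avgKernel.sub I.memLp_top_avgKernel) x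

lemma haarSum_eq_zero_of_notMem {I : DyadicInterval} {s : Finset DyadicInterval}
    (hs : ∀ J ∈ s, J.set ⊆ I.set) (c : DyadicInterval → E) {t : ℝ} (ht : t ∉ I.set) :
    haarSum s c t = 0 :=
  sum_eq_zero fun J hJ => by rw [haar_of_notMem fun h => ht (hs J hJ h), zero_smul]

lemma localSweep_eq_zero_of_notMem {I : DyadicInterval} {s : Finset DyadicInterval}
    (hs : ∀ K ∈ s, K.set ⊆ I.set) (x : DyadicInterval → E) {t : ℝ} (ht : t ∉ I.set) :
    localSweep I s x t = 0 :=
  sum_eq_zero fun K hK => by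
    rw [avgKernel, avgKernel, ind_of_notMem ht, ind_of_notMem fun h => ht (hs K hK h)]
    simp

variable [CompleteSpace E]

lemma integral_localSweep (I : DyadicInterval) (s : Finset DyadicInterval)
    (x : DyadicInterval → E) : ∫ t, localSweep I s x t ∂circleMeasure = 0 := by
  simp_rw [localSweep]
  rw [integral_sum_smul_const (φ := fun K t => K.avgKernel t - I.avgKernel t) s fun K _ =>
    (K.memLp_top_avgKernel.sub I.memLp_top_avgKernel).integrable le_top]
  refine sum_eq_zero fun K _ => ?_
  rw [integral_sub (K.memLp_top_avgKernel.integrable le_top)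
    (I.memLp_top_avgKernel.integrable le_top), integral_avgKernel, integral_avgKernel, sub_self,
    zero_smul]

lemma avg_localSweep_self {I : DyadicInterval} {s : Finset DyadicInterval}
    (hs : ∀ K ∈ s, K.set ⊆ I.set) (x : DyadicInterval → E) : avg (localSweep I s x) I = 0 := by
  rw [avg, setIntegral_eq_integral_circleMeasure fun t ht => localSweep_eq_zero_of_notMem hs x ht,
    integral_localSweep, smul_zero]

end FiniteSums

section Parseval

variable {H : Type*} [NormedAddCommGroup H] [InnerProductSpace ℂ H]

local notation "⟪" x ", " y "⟫" => inner ℂ x y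

lemma integral_inner_haarSum (s s' : Finset DyadicInterval) (c d : DyadicInterval → H) :
    ∫ t, ⟪haarSum s c t, haarSum s' d t⟫ ∂circleMeasure = ∑ J ∈ s ∩ s', ⟪c J, d J⟫ := by
  have hexpand (t : ℝ) : ⟪haarSum s c t, haarSum s' d t⟫ =
      ∑ J ∈ s, ∑ J' ∈ s', (J.haar t * J'.haar t) • ⟪c J, d J'⟫ := by
    simp_rw [haarSum, sum_inner, inner_sum, inner_smul_left_eq_smul, inner_smul_right_eq_smul,
      smul_smul]
  have hint (J J' : DyadicInterval) : Integrable (fun t => J.haar t * J'.haar t) circleMeasure :=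
    integrable_mul_of_memLp_top J.memLp_top_haar J'.memLp_top_haar
  simp_rw [hexpand]
  rw [integral_finsetSum s fun J _ => integrable_finsetSum s' fun J' _ => (hint J J').smul_const _]
  simp_rw [integral_sum_smul_const s' (fun J' _ => hint _ J'), integral_haar_mul_haar, ite_smul,
    one_smul, zero_smul, sum_ite_eq, sum_ite_mem]

variable [CompleteSpace H]

lemma integral_inner_localSweep_self {I : DyadicInterval} {s : Finset DyadicInterval}
    (hs : ∀ K ∈ s, K.set ⊆ I.set) (x : DyadicInterval → H) :
    ∫ t, ⟪localSweep I s x t, localSweep I s x t⟫ ∂circleMeasure =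
      ∑ K ∈ s, ⟪x K, avg (localSweep I s x) K⟫ := by
  set v := localSweep I s x
  have hexpand (t : ℝ) : ⟪v t, v t⟫ = ∑ K ∈ s, ⟪x K, (K.avgKernel t - I.avgKernel t) • v t⟫ := by
    rw [show ⟪v t, v t⟫ = ⟪∑ K ∈ s, (K.avgKernel t - I.avgKernel t) • x K, v t⟫ from rfl]
    simp_rw [sum_inner, inner_smul_left_eq_smul, inner_smul_right_eq_smul]
  have hint (K : DyadicInterval) : Integrable (fun t => K.avgKernel t • v t) circleMeasure :=
    ((memLp_top_localSweep I s x).smul K.memLp_top_avgKernel).integrable le_top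
  have hint' (K : DyadicInterval) :
      Integrable (fun t => K.avgKernel t • v t - I.avgKernel t • v t) circleMeasure :=
    (hint K).sub (hint I)
  simp_rw [hexpand, sub_smul]
  rw [integral_finsetSum s fun K _ => (hint' K).const_inner _]
  refine sum_congr rfl fun K _ => ?_
  rw [integral_inner (hint' K), integral_sub (hint K) (hint I),
    ← avg_eq_integral_avgKernel_smul, ← avg_eq_integral_avgKernel_smul, avg_localSweep_self hs,
    sub_zero]

end Parseval

section L2

local notation "⟪" x ", " y "⟫" => inner ℂ x y

lemma sq_eLpNorm_le_of_integral_inner_eq {α H : Type*} [MeasurableSpace α] {μ : Measure α}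
    [NormedAddCommGroup H] [InnerProductSpace ℂ H] {v g w : α → H} (hv : MemLp v 2 μ)
    (hg : MemLp g 2 μ) (hw : MemLp w 2 μ) (h : ∫ t, ⟪v t, v t⟫ ∂μ = ∫ t, ⟪g t, w t⟫ ∂μ) :
    eLpNorm v 2 μ ^ 2 ≤ eLpNorm g 2 μ * eLpNorm w 2 μ := by
  have hL2 {u u' : α → H} (hu : MemLp u 2 μ) (hu' : MemLp u' 2 μ) :
      ∫ t, ⟪u t, u' t⟫ ∂μ = ⟪hu.toLp u, hu'.toLp u'⟫ := by
    rw [L2.inner_def]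
    refine integral_congr_ae ?_
    filter_upwards [hu.coeFn_toLp, hu'.coeFn_toLp] with t h1 h2
    rw [h1, h2]
  have hnorm : ‖hv.toLp v‖ ^ 2 ≤ ‖hg.toLp g‖ * ‖hw.toLp w‖ :=
    calc ‖hv.toLp v‖ ^ 2 = RCLike.re ⟪hv.toLp v, hv.toLp v⟫ := (inner_self_eq_norm_sq _).symm
      _ = RCLike.re ⟪hg.toLp g, hw.toLp w⟫ := by rw [← hL2 hv hv, h, hL2 hg hw]
      _ ≤ ‖⟪hg.toLp g, hw.toLp w⟫‖ := RCLike.re_le_norm _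
      _ ≤ ‖hg.toLp g‖ * ‖hw.toLp w‖ := norm_inner_le_norm _ _
  rw [Lp.norm_toLp, Lp.norm_toLp, Lp.norm_toLp] at hnorm
  rw [← ENNReal.ofReal_toReal hv.eLpNorm_ne_top, ← ENNReal.ofReal_toReal hg.eLpNorm_ne_top,
    ← ENNReal.ofReal_toReal hw.eLpNorm_ne_top, ← ENNReal.ofReal_pow ENNReal.toReal_nonneg,
    ← ENNReal.ofReal_mul ENNReal.toReal_nonneg]
  exact ENNReal.ofReal_le_ofReal hnorm

lemma eLpNorm_le_l2NormOp_mul {H : Type*} [NormedAddCommGroup H] [InnerProductSpace ℂ H]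
    {T : (ℝ → H) → ℝ → H} (hT : ∀ (r : ℝ) (f : ℝ → H), T (r • f) = r • T f) {f : ℝ → H}
    (hf : MemLp f 2 circleMeasure) (hmean : ∫ t, f t ∂circleMeasure = 0)
    (hf0 : eLpNorm f 2 circleMeasure ≠ 0) :
    eLpNorm (T f) 2 circleMeasure ≤ l2NormOp T * eLpNorm f 2 circleMeasure := by
  have hfin := hf.eLpNorm_ne_top
  set r : ℝ := (eLpNorm f 2 circleMeasure).toReal⁻¹
  have hr : ‖r‖ₑ = (eLpNorm f 2 circleMeasure)⁻¹ := by
    rw [Real.enorm_eq_ofReal (by positivity),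
      ENNReal.ofReal_inv_of_pos (ENNReal.toReal_pos hf0 hfin), ENNReal.ofReal_toReal hfin]
  have hnorm : eLpNorm (r • f) 2 circleMeasure = 1 := by
    rw [eLpNorm_const_smul, hr, ENNReal.inv_mul_cancel hf0 hfin]
  have hle : eLpNorm (T (r • f)) 2 circleMeasure ≤ l2NormOp T :=
    le_iSup (fun g : {g : ℝ → H // MemLp g 2 circleMeasure ∧ (∫ t, g t ∂circleMeasure) = 0 ∧
        eLpNorm g 2 circleMeasure ≤ 1} => eLpNorm (T g.1) 2 circleMeasure)
      ⟨r • f, hf.const_smul r, by simp [integral_smul, hmean], hnorm.le⟩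
  rwa [hT, eLpNorm_const_smul, hr, ENNReal.inv_mul_le_iff hf0 hfin, mul_comm] at hle

end L2

section Oscillation

variable {E : Type*} [NormedAddCommGroup E] [NormedSpace ℝ E]

/-- `bmoNorm f` is the supremum of `meanOsc f I` over `I`. -/
def meanOsc (f : ℝ → E) (I : DyadicInterval) : ℝ≥0∞ :=
  ENNReal.ofReal (I.len⁻¹ * ∫ t in I.set, ‖f t - avg f I‖ ^ 2) ^ (1/2 : ℝ)

lemma meanOsc_eq_of_sub_avg_eq {f g : ℝ → E} {I : DyadicInterval} (hg : MemLp g 2 circleMeasure)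
    (hoff : ∀ t ∉ I.set, g t = 0) (hon : ∀ t ∈ I.set, f t - avg f I = g t) :
    meanOsc f I = ENNReal.ofReal I.len⁻¹ ^ (1/2 : ℝ) * eLpNorm g 2 circleMeasure := by
  have hint : ∫ t in I.set, ‖f t - avg f I‖ ^ 2 = ∫ t, ‖g t‖ ^ 2 ∂circleMeasure := by
    rw [setIntegral_congr_fun I.measurableSet_set fun t ht => by rw [hon t ht]]
    exact setIntegral_eq_integral_circleMeasure fun t ht => by simp [hoff t ht]
  rw [meanOsc, hint, ENNReal.ofReal_mul (inv_nonneg.mpr I.len_pos.le),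
    ENNReal.mul_rpow_of_nonneg _ _ (by norm_num),
    hg.eLpNorm_eq_integral_rpow_norm two_ne_zero ENNReal.ofNat_ne_top,
    ENNReal.ofReal_rpow_of_nonneg (integral_nonneg fun t => by positivity) (by norm_num)]
  norm_num

end Oscillation

section BilinearSweep

variable {H : Type*} [NormedAddCommGroup H] [InnerProductSpace ℂ H]

lemma Bfun_apply_apply (F : OpCoeffs H) (t : ℝ) (e : H) :
    Bfun F t e = haarSum F.support (fun J => F J e) t := by
  simp [Bfun, haarSum]

lemma PIB_apply_apply (F : OpCoeffs H) (I : DyadicInterval) (t : ℝ) (e : H) :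
    PIB F I t e = haarSum (F.support.filter fun J => J.set ⊆ I.set) (fun J => F J e) t := by
  simp [PIB, haarSum]

lemma para_smul (b : OpCoeffs H) (r : ℝ) (f : ℝ → H) : para b (r • f) = r • para b f := by
  ext t
  simp only [para, Pi.smul_apply, smul_sum, avg, integral_smul, smul_comm r,
    ContinuousLinearMap.map_smul_of_tower]

variable [CompleteSpace H]

lemma DeltaBil_apply_apply (b F : OpCoeffs H) (t : ℝ) (e : H) :
    DeltaBil b F t e = ∑ K ∈ b.support ∪ F.support, K.avgKernel t • adjoint (b K) (F K e) := by
  simp [DeltaBil, avgKernel]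

lemma haarCoeff_DeltaBil (b F : OpCoeffs H) (J : DyadicInterval) :
    haarCoeff (DeltaBil b F) J = ∑ K ∈ b.support ∪ F.support,
      (∫ t, J.haar t * K.avgKernel t ∂circleMeasure) • (adjoint (b K) ∘L F K) :=
  haarCoeff_sum_smul_const J _ (fun K _ => K.memLp_top_avgKernel) _

lemma PIBF_DeltaBil_apply_apply (b F : OpCoeffs H) (I : DyadicInterval) (t : ℝ) (e : H) :
    PIBF (DeltaBil b F) I t e =
      localSweep I ((b.support ∪ F.support).filter fun K => K.set ⊆ I.set)
        (fun K => adjoint (b K) (F K e)) t := by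
  have hsum (K : DyadicInterval) : Summable fun J : {J : DyadicInterval // J.set ⊆ I.set} =>
      (J : DyadicInterval).haar t *
        ∫ s, (J : DyadicInterval).haar s * K.avgKernel s ∂circleMeasure :=
    summable_of_ne_finset_zero (s := K.strictAncestors.subtype _) fun J hJ => by
      rw [integral_haar_mul_avgKernel_of_notMem (mem_subtype.not.mp hJ), mul_zero]
  simp_rw [PIBF, haarCoeff_DeltaBil, smul_sum, smul_smul]
  rw [Summable.tsum_finsetSum fun K _ => (hsum K).smul_const _]
  simp_rw [(hsum _).tsum_smul_const, tsum_haar_mul_integral_haar_mul_avgKernel, localSweep,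
    sum_filter, ite_smul, zero_smul]
  simp only [FunLike.coe_sum, Finset.sum_apply]
  refine sum_congr rfl fun K _ => ?_
  split_ifs <;> simp

end BilinearSweep

section BilinearSweepBound

variable {H : Type*} [NormedAddCommGroup H] [InnerProductSpace ℂ H] [CompleteSpace H]

local notation "⟪" x ", " y "⟫" => inner ℂ x y

lemma integral_inner_PIBF_DeltaBil_self (b F : OpCoeffs H) (I : DyadicInterval) (e : H) :
    ∫ t, ⟪PIBF (DeltaBil b F) I t e, PIBF (DeltaBil b F) I t e⟫ ∂circleMeasure =
      ∫ t, ⟪PIB F I t e, para b (fun t => PIBF (DeltaBil b F) I t e) t⟫ ∂circleMeasure := by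
  simp only [PIBF_DeltaBil_apply_apply, PIB_apply_apply]
  rw [integral_inner_localSweep_self fun K hK => (mem_filter.mp hK).2,
    show para b _ = haarSum b.support _ from rfl, integral_inner_haarSum]
  simp_rw [adjoint_inner_left]
  refine (sum_subset (fun K hK => ?_) fun K hKs hK => ?_).symm
  · simp only [mem_inter, mem_filter, mem_union] at hK ⊢
    exact ⟨Or.inr hK.1.1, hK.1.2⟩
  · simp only [mem_inter, mem_filter, mem_union, Finsupp.mem_support_iff] at hKs hK
    by_cases hF : F K = 0
    · simp [hF]
    · simp [show b K = 0 by tauto]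

lemma eLpNorm_PIBF_DeltaBil_le (b F : OpCoeffs H) (I : DyadicInterval) (e : H) :
    eLpNorm (fun t => PIBF (DeltaBil b F) I t e) 2 circleMeasure ≤
      l2NormOp (para b) * eLpNorm (fun t => PIB F I t e) 2 circleMeasure := by
  have hinner := integral_inner_PIBF_DeltaBil_self b F I e
  simp only [PIBF_DeltaBil_apply_apply, PIB_apply_apply] at hinner ⊢
  set v := localSweep I _ fun K => adjoint (b K) (F K e)
  set g := haarSum (F.support.filter fun J => J.set ⊆ I.set) fun J => F J e
  have hv : MemLp v 2 circleMeasure := (memLp_top_localSweep _ _ _).mono_exponent le_top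
  by_cases h0 : eLpNorm v 2 circleMeasure = 0
  · simp [h0]
  rw [← ENNReal.mul_le_mul_iff_right h0 hv.eLpNorm_ne_top]
  calc eLpNorm v 2 circleMeasure * eLpNorm v 2 circleMeasure
      = eLpNorm v 2 circleMeasure ^ 2 := (sq _).symm
    _ ≤ eLpNorm g 2 circleMeasure * eLpNorm (para b v) 2 circleMeasure :=
      sq_eLpNorm_le_of_integral_inner_eq hv ((memLp_top_haarSum _ _).mono_exponent le_top)
        ((memLp_top_haarSum _ _).mono_exponent le_top) hinner
    _ ≤ eLpNorm g 2 circleMeasure * (l2NormOp (para b) * eLpNorm v 2 circleMeasure) := by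
      gcongr
      exact eLpNorm_le_l2NormOp_mul (para_smul b) hv (integral_localSweep _ _ _) h0
    _ = eLpNorm v 2 circleMeasure * (l2NormOp (para b) * eLpNorm g 2 circleMeasure) := by ring

lemma meanOsc_DeltaBil_apply (b F : OpCoeffs H) (I : DyadicInterval) (e : H) :
    meanOsc (fun t => DeltaBil b F t e) I = ENNReal.ofReal I.len⁻¹ ^ (1/2 : ℝ) *
      eLpNorm (fun t => PIBF (DeltaBil b F) I t e) 2 circleMeasure := by
  have hs : ∀ K ∈ (b.support ∪ F.support).filter fun K => K.set ⊆ I.set, K.set ⊆ I.set :=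
    fun K hK => (mem_filter.mp hK).2
  simp only [PIBF_DeltaBil_apply_apply]
  refine meanOsc_eq_of_sub_avg_eq ((memLp_top_localSweep _ _ _).mono_exponent le_top)
    (fun t ht => localSweep_eq_zero_of_notMem hs _ ht) fun t ht => ?_
  simp_rw [DeltaBil_apply_apply]
  rw [sum_smul_const_sub_avg I _ (fun K _ => K.memLp_top_avgKernel), localSweep, sum_filter]
  simp_rw [avgKernel_sub_avg_of_mem ht, ite_smul, zero_smul]

lemma meanOsc_Bfun_apply (F : OpCoeffs H) (I : DyadicInterval) (e : H) :
    meanOsc (fun t => Bfun F t e) I = ENNReal.ofReal I.len⁻¹ ^ (1/2 : ℝ) *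
      eLpNorm (fun t => PIB F I t e) 2 circleMeasure := by
  have hs : ∀ J ∈ F.support.filter fun J => J.set ⊆ I.set, J.set ⊆ I.set :=
    fun J hJ => (mem_filter.mp hJ).2
  simp only [PIB_apply_apply]
  refine meanOsc_eq_of_sub_avg_eq ((memLp_top_haarSum _ _).mono_exponent le_top)
    (fun t ht => haarSum_eq_zero_of_notMem hs _ ht) fun t ht => ?_
  simp_rw [Bfun_apply_apply, haarSum]
  rw [sum_smul_const_sub_avg I _ (fun J _ => J.memLp_top_haar), sum_filter]
  simp_rw [haar_sub_avg_of_mem ht, ite_smul, zero_smul]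

lemma sbmoNorm_DeltaBil_le (b F : OpCoeffs H) :
    sbmoNorm (DeltaBil b F) ≤ l2NormOp (para b) * sbmoNorm (Bfun F) := by
  refine iSup_le fun e => iSup_le fun I => ?_
  calc meanOsc (fun t => DeltaBil b F t e.1) I
      ≤ ENNReal.ofReal I.len⁻¹ ^ (1/2 : ℝ) *
          (l2NormOp (para b) * eLpNorm (fun t => PIB F I t e.1) 2 circleMeasure) := by
        rw [meanOsc_DeltaBil_apply]
        gcongr
        exact eLpNorm_PIBF_DeltaBil_le b F I e.1
    _ = l2NormOp (para b) * meanOsc (fun t => Bfun F t e.1) I := by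
        rw [meanOsc_Bfun_apply]
        ring
    _ ≤ l2NormOp (para b) * sbmoNorm (Bfun F) := by
        gcongr
        exact (le_iSup (fun I => meanOsc (fun t => Bfun F t e.1) I) I).trans
          (le_iSup (fun e : {e : H // ‖e‖ = 1} => bmoNorm fun t => Bfun F t e.1) e)

end BilinearSweepBound

end

/-- `‖Δ(B,F)‖_{SBMO} ≤ C ‖π_B‖ ‖F‖_{SBMO}`, via
`‖P_I Δ(B,F) e‖_{L²} ≤ ‖π_B‖ ‖P_I F_e‖_{L²}`. -/
theorem DeltaBil_sbmo_norm_le :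
    ∃ C : ℝ≥0∞, 0 < C ∧ C ≠ ⊤ ∧
      ∀ (H : Type) [NormedAddCommGroup H] [InnerProductSpace ℂ H] [CompleteSpace H] (b F : OpCoeffs H),
        (sbmoNorm (DeltaBil b F) ≤ C * (l2NormOp (para b) * sbmoNorm (Bfun F))) ∧
        ∀ (I : DyadicInterval) (e : H),
          eLpNorm (fun t => (PIBF (DeltaBil b F) I t) e) 2 circleMeasure ≤
            l2NormOp (para b) * eLpNorm (fun t => (PIB F I t) e) 2 circleMeasure :=
  ⟨1, one_pos, ENNReal.one_ne_top, fun _ _ _ _ b F =>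
    ⟨(one_mul (l2NormOp (para b) * sbmoNorm (Bfun F))).symm ▸ sbmoNorm_DeltaBil_le b F,
      eLpNorm_PIBF_DeltaBil_le b F⟩⟩
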